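/- Let s₀ = ⌈(64/Δ̄²)·W(n_j Δ̄²/64)⌉ where W is the Lambert W function, Δ̄ > 0, n_j ≥ 1. Then √((4/s₀)·log₊(n_j/s₀)) ≤ Δ̄/4, where log₊(x) = max(0, log x). -/

import Mathlib

open Real

/-! If `w e^w = n / c` and `s ≥ c w`, then `n / s ≤ n / (c w) = e^w`, so `log⁺ (n / s) ≤ w` and
`log⁺ (n / s) / s ≤ w / (c w) = 1 / c`. With `c = 64 / Δ̄²` this is `(4 / s₀) log⁺ (n_j / s₀) ≤ Δ̄² / 16`. -/

namespace Real

variable {n c w s : ℝ}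

theorem posLog_div_le_of_mul_exp_eq (hc : 0 < c) (hw : 0 < w)
    (hwn : w * exp w = n / c) (hs : c * w ≤ s) : log⁺ (n / s) ≤ w := by
  have hs_pos : 0 < s := (mul_pos hc hw).trans_le hs
  have hn : 0 < n := (div_pos_iff_of_pos_right hc).1 (hwn ▸ mul_pos hw (exp_pos w))
  have hdiv : n / s ≤ exp w :=
    calc n / s ≤ n / (c * w) := div_le_div_of_nonneg_left hn.le (mul_pos hc hw) hs
      _ = exp w := by rw [div_mul_eq_div_div, ← hwn, mul_div_cancel_left₀ _ hw.ne']
  refine max_le hw.le ?_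
  calc log (n / s) ≤ log (exp w) := log_le_log (by positivity) hdiv
    _ = w := log_exp w

theorem posLog_div_div_le_of_mul_exp_eq (hc : 0 < c) (hw : 0 < w)
    (hwn : w * exp w = n / c) (hs : c * w ≤ s) : log⁺ (n / s) / s ≤ 1 / c :=
  calc log⁺ (n / s) / s ≤ w / (c * w) :=
        div_le_div₀ hw.le (posLog_div_le_of_mul_exp_eq hc hw hwn hs) (mul_pos hc hw) hs
    _ = 1 / c := by field_simp

end Real

/-- Calculus fact used in the stopping time bound: with
`s₀ = ⌈(64/Δ̄²)·W(n_j Δ̄²/64)⌉` (Lambert W function `W`), one has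
`√((4/s₀)·log₊(n_j/s₀)) ≤ Δ̄/4`. -/
theorem lambertW_ceil_confidence_bound
    (Δbar nj : ℝ) (hΔ : 0 < Δbar) (hnj : 1 ≤ nj)
    (W : ℝ → ℝ) (hW : ∀ x, 0 ≤ x → 0 ≤ W x ∧ W x * Real.exp (W x) = x)
    (s0 : ℕ) (hs0 : s0 = ⌈64 / Δbar ^ 2 * W (nj * Δbar ^ 2 / 64)⌉₊) :
    Real.sqrt (4 / s0 * max 0 (Real.log (nj / s0))) ≤ Δbar / 4 := by
  set w := W (nj * Δbar ^ 2 / 64)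
  have hx : 0 < nj * Δbar ^ 2 / 64 := by positivity
  have hWx : w * exp w = nj * Δbar ^ 2 / 64 := (hW _ hx.le).2
  have hw : 0 < w := pos_of_mul_pos_left (hWx ▸ hx) (exp_pos w).le
  have hwn : w * exp w = nj / (64 / Δbar ^ 2) := by rw [hWx]; field_simp
  have hs : 64 / Δbar ^ 2 * w ≤ s0 := hs0 ▸ Nat.le_ceil _
  have hbound := posLog_div_div_le_of_mul_exp_eq (by positivity) hw hwn hs
  rw [← posLog_apply, sqrt_le_left (by positivity)]
  calc 4 / s0 * log⁺ (nj / s0) = 4 * (log⁺ (nj / s0) / s0) := by ring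
    _ ≤ 4 * (1 / (64 / Δbar ^ 2)) := by gcongr
    _ = (Δbar / 4) ^ 2 := by field_simp; ring
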